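/- Let ϱ be a density matrix on the N-fold tensor product ℂ^{D_1} ⊗ ⋯ ⊗ ℂ^{D_N}, and for each k let Π^k be the support projector of the k-th single-party reduction ϱ^k = tr_{all factors except k}(ϱ). Then (Π^1 ⊗ ⋯ ⊗ Π^N) ϱ (Π^1 ⊗ ⋯ ⊗ Π^N) = ϱ. -/

import Mathlib

/-!
Let `E_k` be the support projector `Π^k` acting on the `k`-th factor alone. Tracing out the other
factors gives `tr (ϱ E_k) = tr (ϱ^k Π^k) = tr ϱ^k = tr ϱ`, and for a positive semidefinite `ϱ` and
an orthogonal projection `E` the identity `tr (ϱ E) = tr ϱ` forces `ϱ E = E ϱ = ϱ`. The operator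
`Π^1 ⊗ ⋯ ⊗ Π^N` is the product of the `E_k`, so it fixes `ϱ` on both sides.
-/

open scoped Kronecker Matrix ComplexOrder BigOperators
open Matrix

noncomputable section

/-- The rank-one operator `|v⟩⟨w| = v wᴴ`. -/
def ketBra {n : Type*} (v w : n → ℂ) : Matrix n n ℂ := Matrix.vecMulVec v (star w)

/-- A density matrix: positive semidefinite with unit trace. -/
def IsDensityMatrix {n : Type*} [Fintype n] (ρ : Matrix n n ℂ) : Prop :=
  ρ.PosSemidef ∧ ρ.trace = 1

/-- An orthonormal family of vectors. -/
def OrthonormalFamily {n I : Type*} [Fintype n] [DecidableEq I] (e : I → n → ℂ) : Prop :=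
  ∀ i j, star (e i) ⬝ᵥ e j = (if i = j then 1 else 0)

/-- The `N`-fold Kronecker (tensor) product of a family of matrices. -/
def tensorFamily {N : ℕ} {D : Fin N → ℕ} (M : ∀ k, Matrix (Fin (D k)) (Fin (D k)) ℂ) :
    Matrix (∀ k, Fin (D k)) (∀ k, Fin (D k)) ℂ :=
  fun a a' => ∏ k, M k (a k) (a' k)

/-- The Kronecker (tensor) product of the matrices `M k` over the factors `k ∈ K`. -/
def tensorOn {N : ℕ} {D : Fin N → ℕ} (K : Finset (Fin N))
    (M : ∀ k, Matrix (Fin (D k)) (Fin (D k)) ℂ) :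
    Matrix (∀ k : K, Fin (D k.1)) (∀ k : K, Fin (D k.1)) ℂ :=
  fun a a' => ∏ k : K, M k.1 (a k) (a' k)

/-- The partial trace of a matrix on an `N`-fold tensor product over all
tensor factors *not* in `K` (entrywise: sum over equal indices in the traced factors). -/
def reduceTo {N : ℕ} {D : Fin N → ℕ} (K : Finset (Fin N))
    (M : Matrix (∀ k, Fin (D k)) (∀ k, Fin (D k)) ℂ) :
    Matrix (∀ k : K, Fin (D k.1)) (∀ k : K, Fin (D k.1)) ℂ :=
  fun a a' => ∑ b : ∀ k : {k : Fin N // k ∉ K}, Fin (D k.1),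
    M (fun k => if h : k ∈ K then a ⟨k, h⟩ else b ⟨k, h⟩)
      (fun k => if h : k ∈ K then a' ⟨k, h⟩ else b ⟨k, h⟩)

/-- The single-party reduction: the partial trace over all tensor factors except the `k`-th. -/
def reduceSingle {N : ℕ} {D : Fin N → ℕ} (k : Fin N)
    (M : Matrix (∀ l, Fin (D l)) (∀ l, Fin (D l)) ℂ) :
    Matrix (Fin (D k)) (Fin (D k)) ℂ :=
  fun a a' => ∑ b : ∀ l : {l : Fin N // l ≠ k}, Fin (D l.1),
    M (fun l => if h : l = k then cast (congrArg (fun i => Fin (D i)) h.symm) a else b ⟨l, h⟩)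
      (fun l => if h : l = k then cast (congrArg (fun i => Fin (D i)) h.symm) a' else b ⟨l, h⟩)

/-- The support projector of a Hermitian matrix: the orthogonal projection onto its range. -/
def suppProj {n : Type*} [Fintype n] [DecidableEq n] (A : Matrix n n ℂ) : Matrix n n ℂ :=
  if hA : A.IsHermitian then
    (hA.eigenvectorUnitary : Matrix n n ℂ) *
      Matrix.diagonal (fun i => if hA.eigenvalues i = 0 then (0 : ℂ) else 1) *
      (hA.eigenvectorUnitary : Matrix n n ℂ)ᴴ
  else 0

namespace Matrix.PosSemidef

variable {n 𝕜 : Type*} [Fintype n] [DecidableEq n] [RCLike 𝕜] {ρ E : Matrix n n 𝕜}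

/-- Writing `ρ = Bᴴ B` and `Q = 1 - E`, the hypothesis says `tr ((B Q) (B Q)ᴴ) = tr (ρ Q) = 0`,
so `B Q = 0` and hence `ρ Q = 0`. -/
lemma mul_eq_self_of_trace_mul_eq (hρ : ρ.PosSemidef) (hE : IsStarProjection E)
    (htr : (ρ * E).trace = ρ.trace) : ρ * E = ρ := by
  open scoped MatrixOrder in
  obtain ⟨B, rfl⟩ := CStarAlgebra.nonneg_iff_eq_star_mul_self.mp hρ.nonneg
  set Q := 1 - E
  have hQ : IsStarProjection Q := hE.one_sub
  have hBQ : B * Q = 0 := by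
    rw [← trace_mul_conjTranspose_self_eq_zero_iff, conjTranspose_mul, ← star_eq_conjTranspose Q,
      hQ.isSelfAdjoint.star_eq, ← Matrix.mul_assoc, Matrix.mul_assoc B, hQ.isIdempotentElem.eq,
      trace_mul_cycle, ← star_eq_conjTranspose, Matrix.mul_sub, Matrix.mul_one, trace_sub, htr,
      sub_self]
  have hρQ : star B * B * Q = 0 := by rw [Matrix.mul_assoc, hBQ, Matrix.mul_zero]
  rwa [Matrix.mul_sub, Matrix.mul_one, sub_eq_zero, eq_comm] at hρQ

lemma mul_eq_self_of_trace_mul_eq' (hρ : ρ.PosSemidef) (hE : IsStarProjection E)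
    (htr : (ρ * E).trace = ρ.trace) : E * ρ = ρ := by
  have h := congrArg star (hρ.mul_eq_self_of_trace_mul_eq hE htr)
  rwa [star_mul, hE.isSelfAdjoint.star_eq, star_eq_conjTranspose, hρ.isHermitian.eq] at h

end Matrix.PosSemidef

section suppProj

variable {n : Type*} [Fintype n] [DecidableEq n] {A : Matrix n n ℂ}

lemma suppProj_eq_conjStarAlgAut (hA : A.IsHermitian) :
    suppProj A = Unitary.conjStarAlgAut ℂ _ hA.eigenvectorUnitary
      (diagonal fun i => if hA.eigenvalues i = 0 then 0 else 1) := by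
  rw [suppProj, dif_pos hA, Unitary.conjStarAlgAut_apply, star_eq_conjTranspose]

lemma isStarProjection_suppProj (hA : A.IsHermitian) : IsStarProjection (suppProj A) := by
  rw [suppProj_eq_conjStarAlgAut hA]
  refine IsStarProjection.map ⟨?_, ?_⟩ _
  · rw [IsIdempotentElem, diagonal_mul_diagonal]
    congr 1; funext i; split_ifs <;> simp [*]
  · rw [IsSelfAdjoint, star_eq_conjTranspose, diagonal_conjTranspose]
    congr 1; funext i; split_ifs <;> simp [*]

lemma mul_suppProj (hA : A.IsHermitian) : A * suppProj A = A := by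
  rw [suppProj_eq_conjStarAlgAut hA]
  nth_rw 1 [hA.spectral_theorem]
  rw [← map_mul, diagonal_mul_diagonal]
  convert hA.spectral_theorem.symm using 3
  funext i; split_ifs with h <;> simp [h]

end suppProj

lemma Matrix.prod_one_apply {ι R : Type*} [Fintype ι] [CommMonoidWithZero R] {κ : ι → Type*}
    [∀ i, DecidableEq (κ i)] (a b : ∀ i, κ i) :
    ∏ i, (1 : Matrix (κ i) (κ i) R) (a i) (b i) = (1 : Matrix (∀ i, κ i) (∀ i, κ i) R) a b := by
  simp only [one_apply, Finset.prod_boole, Finset.mem_univ, true_implies, funext_iff]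

lemma Pi.isStarProjection_mulSingle {ι : Type*} {R : ι → Type*} [DecidableEq ι]
    [∀ i, Monoid (R i)] [∀ i, StarMul (R i)] {i : ι} {p : R i} (hp : IsStarProjection p) :
    IsStarProjection (Pi.mulSingle i p) :=
  ⟨by rw [IsIdempotentElem, ← Pi.mulSingle_mul, hp.isIdempotentElem.eq],
    by rw [IsSelfAdjoint, Pi.star_mulSingle, hp.isSelfAdjoint.star_eq]⟩

section tensorFamily

variable {N : ℕ} {D : Fin N → ℕ}

lemma tensorFamily_one : tensorFamily (1 : ∀ k, Matrix (Fin (D k)) (Fin (D k)) ℂ) = 1 := by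
  ext a b
  exact Matrix.prod_one_apply a b

lemma tensorFamily_mul (A B : ∀ k, Matrix (Fin (D k)) (Fin (D k)) ℂ) :
    tensorFamily (A * B) = tensorFamily A * tensorFamily B := by
  ext a a'
  simp only [tensorFamily, Pi.mul_apply, mul_apply, Finset.prod_univ_sum, Fintype.piFinset_univ,
    ← Finset.prod_mul_distrib]

lemma tensorFamily_star (A : ∀ k, Matrix (Fin (D k)) (Fin (D k)) ℂ) :
    tensorFamily (star A) = star (tensorFamily A) := by
  ext a a'
  simp [tensorFamily]

lemma isStarProjection_tensorFamily {P : ∀ k, Matrix (Fin (D k)) (Fin (D k)) ℂ}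
    (hP : IsStarProjection P) : IsStarProjection (tensorFamily P) :=
  ⟨by rw [IsIdempotentElem, ← tensorFamily_mul, hP.isIdempotentElem.eq],
    by rw [IsSelfAdjoint, ← tensorFamily_star, hP.isSelfAdjoint.star_eq]⟩

lemma tensorFamily_induction (p : Matrix (∀ k, Fin (D k)) (∀ k, Fin (D k)) ℂ → Prop)
    (P : ∀ k, Matrix (Fin (D k)) (Fin (D k)) ℂ) (hmul : ∀ X Y, p X → p Y → p (X * Y))
    (hone : p 1) (hsingle : ∀ k, p (tensorFamily (Pi.mulSingle k (P k)))) :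
    p (tensorFamily P) := by
  rw [← Finset.noncommProd_mulSingle P]
  refine Finset.noncommProd_induction _ _ _ (fun X => p (tensorFamily X))
    (fun X Y hX hY => ?_) ?_ fun k _ => hsingle k
  · rw [tensorFamily_mul]; exact hmul _ _ hX hY
  · rw [tensorFamily_one]; exact hone

end tensorFamily

section reduceSingle

variable {N : ℕ} {D : Fin N → ℕ}

lemma reduceSingle_apply (k : Fin N) (M : Matrix (∀ l, Fin (D l)) (∀ l, Fin (D l)) ℂ)
    (x x' : Fin (D k)) :
    reduceSingle k M x x' = ∑ b, M ((Equiv.piSplitAt k _).symm (x, b))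
      ((Equiv.piSplitAt k _).symm (x', b)) := by
  have hsymm : ∀ (y : Fin (D k)) (b : ∀ l : {l // l ≠ k}, Fin (D l.1)),
      (fun l => if h : l = k then cast (congrArg (fun i => Fin (D i)) h.symm) y else b ⟨l, h⟩) =
        (Equiv.piSplitAt k _).symm (y, b) := by
    intro y b; funext l
    by_cases h : l = k
    · subst h; simp
    · simp [h]
  simp only [reduceSingle, hsymm]

lemma tensorFamily_mulSingle_apply (k : Fin N) (X : Matrix (Fin (D k)) (Fin (D k)) ℂ)
    (a a' : ∀ l, Fin (D l)) :
    tensorFamily (Pi.mulSingle k X) a a' =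
      X (a k) (a' k) * (1 : Matrix _ _ ℂ) (Equiv.piSplitAt k _ a).2 (Equiv.piSplitAt k _ a').2 := by
  rw [tensorFamily, Fintype.prod_eq_mul_prod_subtype_ne _ k, ← Matrix.prod_one_apply,
    Pi.mulSingle_eq_same]
  congr 1
  exact Fintype.prod_congr _ _ fun l => by rw [Pi.mulSingle_eq_of_ne l.2]; rfl

lemma trace_mul_tensorFamily_mulSingle (k : Fin N)
    (M : Matrix (∀ l, Fin (D l)) (∀ l, Fin (D l)) ℂ) (X : Matrix (Fin (D k)) (Fin (D k)) ℂ) :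
    (M * tensorFamily (Pi.mulSingle k X)).trace = (reduceSingle k M * X).trace := by
  have hsplit : ∀ f : (∀ l, Fin (D l)) → ℂ,
      ∑ a, f a = ∑ x, ∑ b, f ((Equiv.piSplitAt k _).symm (x, b)) := fun f => by
    rw [← (Equiv.piSplitAt k _).symm.sum_comp, Fintype.sum_prod_type]
  have hk : ∀ x b, (Equiv.piSplitAt k (fun l => Fin (D l))).symm (x, b) k = x := by simp
  simp only [trace, diag_apply, mul_apply, reduceSingle_apply, tensorFamily_mulSingle_apply, hsplit,
    Equiv.apply_symm_apply, hk, one_apply, mul_ite, mul_one, mul_zero, Finset.sum_mul]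
  refine Fintype.sum_congr _ _ fun x => ?_
  rw [Finset.sum_comm]
  refine Fintype.sum_congr _ _ fun y => ?_
  simp only [Finset.sum_ite_eq', Finset.mem_univ, if_true]

lemma reduceSingle_isHermitian {M : Matrix (∀ l, Fin (D l)) (∀ l, Fin (D l)) ℂ}
    (hM : M.IsHermitian) (k : Fin N) : (reduceSingle k M).IsHermitian :=
  ext fun x x' => by
    simp only [conjTranspose_apply, reduceSingle_apply, star_sum, hM.apply]

lemma trace_reduceSingle (k : Fin N) (M : Matrix (∀ l, Fin (D l)) (∀ l, Fin (D l)) ℂ) :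
    (reduceSingle k M).trace = M.trace := by
  simpa [tensorFamily_one] using (trace_mul_tensorFamily_mulSingle k M 1).symm

end reduceSingle

/-- A density matrix is invariant under conjugation by the tensor product of the
support projectors of its single-party reductions. -/
theorem stmt_4 {N : ℕ} {D : Fin N → ℕ}
    (ϱ : Matrix (∀ k, Fin (D k)) (∀ k, Fin (D k)) ℂ) (hϱ : IsDensityMatrix ϱ) :
    tensorFamily (fun k => suppProj (reduceSingle k ϱ)) * ϱ *
      tensorFamily (fun k => suppProj (reduceSingle k ϱ)) = ϱ := by
  set P := fun k => suppProj (reduceSingle k ϱ)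
  have hH : ∀ k, (reduceSingle k ϱ).IsHermitian := reduceSingle_isHermitian hϱ.1.isHermitian
  have hproj : ∀ k, IsStarProjection (tensorFamily (Pi.mulSingle k (P k))) := fun k =>
    isStarProjection_tensorFamily (Pi.isStarProjection_mulSingle (isStarProjection_suppProj (hH k)))
  have htr : ∀ k, (ϱ * tensorFamily (Pi.mulSingle k (P k))).trace = ϱ.trace := fun k => by
    rw [trace_mul_tensorFamily_mulSingle, mul_suppProj (hH k), trace_reduceSingle]
  have hleft : tensorFamily P * ϱ = ϱ :=
    tensorFamily_induction (fun X => X * ϱ = ϱ) P (fun X Y hX hY => by rw [mul_assoc, hY, hX])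
      (one_mul ϱ) fun k => hϱ.1.mul_eq_self_of_trace_mul_eq' (hproj k) (htr k)
  have hright : ϱ * tensorFamily P = ϱ :=
    tensorFamily_induction (fun X => ϱ * X = ϱ) P (fun X Y hX hY => by rw [← mul_assoc, hX, hY])
      (mul_one ϱ) fun k => hϱ.1.mul_eq_self_of_trace_mul_eq (hproj k) (htr k)
  rw [hleft, hright]
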